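/- arXiv:math/0701799 — 8 statements merged into one kernel-verified Lean document; each statement's English description precedes it below -/
import Mathlib

section
/- Let A be a unital C*-algebra, 0 < q < 1, and z ∈ A satisfy z*z − q·z·z* = (1−q)·1. Then ‖z‖ = 1. -/
theorem norm_eq_one_of_quantum_disc_relation
    {A : Type*} [CStarAlgebra A] [Nontrivial A] (q : ℝ) (hq0 : 0 < q) (hq1 : q < 1)
    (z : A) (hz : star z * z - (q : ℂ) • (z * star z) = ((1 - q : ℝ) : ℂ) • 1) :
    ‖z‖ = 1 := by
  letI := CStarAlgebra.spectralOrder A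
  haveI := CStarAlgebra.spectralOrderedRing A
  set a := star z * z with ha_def
  set b := z * star z with hb_def
  have ha : (0 : A) ≤ a := star_mul_self_nonneg z
  have hb : (0 : A) ≤ b := mul_star_self_nonneg z
  set t : ℝ := ‖z‖ with ht
  have ht0 : 0 ≤ t := norm_nonneg z
  have hna : ‖a‖ = t * t := CStarRing.norm_star_mul_self
  have hnb : ‖b‖ = t * t := CStarRing.norm_self_mul_star
  -- rewrite relation with real scalars
  have hz' : a - q • b = (1 - q) • (1 : A) := by
    rw [← Complex.coe_smul, ← Complex.coe_smul]; exact hz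
  have heq : a = q • b + (1 - q) • (1 : A) := by
    rw [← hz']; abel
  -- upper bound: t * t ≤ 1
  have hub : t * t ≤ 1 := by
    have h1 : ‖a‖ ≤ ‖q • b‖ + ‖(1 - q) • (1 : A)‖ := heq ▸ norm_add_le _ _
    rw [norm_smul, norm_smul, norm_one, hna, hnb, Real.norm_eq_abs, Real.norm_eq_abs,
      abs_of_pos hq0, abs_of_pos (by linarith : (0:ℝ) < 1 - q), mul_one] at h1
    nlinarith
  -- lower bound
  have hqb : (0 : A) ≤ q • b := smul_nonneg hq0.le hb
  have hle1 : (1 - q) • (1 : A) ≤ a := by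
    rw [heq]; simpa using add_le_add_right hqb ((1 - q) • (1 : A))
  have h1q : 1 - q ≤ t * t := by
    have := CStarAlgebra.norm_le_norm_of_nonneg_of_le
      (smul_nonneg (by linarith : (0:ℝ) ≤ 1 - q) zero_le_one) hle1
    rwa [norm_smul, norm_one, mul_one, Real.norm_eq_abs,
      abs_of_pos (by linarith : (0:ℝ) < 1 - q), hna] at this
  have hle2 : a ≤ algebraMap ℝ A (t * t) := by
    have := IsSelfAdjoint.le_algebraMap_norm_self (a := a) (.of_nonneg ha)
    rwa [hna] at this
  have hqb_eq : q • b = a - (1 - q) • (1 : A) := by rw [← hz']; abel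
  have hle3 : q • b ≤ algebraMap ℝ A (t * t - (1 - q)) := by
    rw [hqb_eq, map_sub, Algebra.algebraMap_eq_smul_one (1 - q)]
    exact sub_le_sub_right hle2 _
  have hlb : q * (t * t) ≤ t * t - (1 - q) := by
    have := (CStarAlgebra.norm_le_iff_le_algebraMap (q • b) (by linarith) hqb).mpr hle3
    rwa [norm_smul, Real.norm_eq_abs, abs_of_pos hq0, hnb] at this
  have htt : t * t = 1 := by nlinarith
  nlinarith [sq_nonneg (t - 1), sq_nonneg (t + 1)]
end

section
/- Let A be a unital C*-algebra, 0 < q < 1, and z₁,…,zₙ ∈ A satisfy zᵢ*zᵢ − q zᵢzᵢ* = (1−q)(1 − Σ_{j=i+1}^n zⱼzⱼ*) for all i = 1,…,n. Then the norms ‖zᵢ‖ are bounded by a constant depending only on n and q (in particular, each ‖zᵢ‖² ≤ (2/(1−q))^{n−i+1}). -/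
private lemma geom_aux {C : ℝ} (hC : 2 ≤ C) : ∀ k : ℕ, ∑ m ∈ Finset.Ico 1 k, C ^ m ≤ C ^ k - 1 := by
  intro k
  induction k with
  | zero => simp
  | succ k ih =>
    rcases Nat.eq_zero_or_pos k with hk | hk
    · subst hk; simp; nlinarith
    · rw [Finset.sum_Ico_succ_top hk]
      have h0 : (0:ℝ) ≤ C ^ k := by positivity
      have h1 : C ^ (k+1) = C * C ^ k := by ring
      nlinarith

theorem norm_bound_of_quantum_ball_relations
    {A : Type*} [CStarAlgebra A] (n : ℕ) (q : ℝ) (hq0 : 0 < q) (hq1 : q < 1)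
    (z : Fin n → A)
    (hrel : ∀ i : Fin n, star (z i) * z i - (q : ℂ) • (z i * star (z i)) =
      ((1 - q : ℝ) : ℂ) • (1 - ∑ j ∈ Finset.Ioi i, z j * star (z j))) :
    ∀ i : Fin n, ‖z i‖ ^ 2 ≤ (2 / (1 - q)) ^ (n - (i : ℕ)) := by
  set C : ℝ := 2 / (1 - q) with hCdef
  have hq : (0:ℝ) < 1 - q := by linarith
  have hC : 2 ≤ C := by
    rw [hCdef, le_div_iff₀ hq]; nlinarith
  have hC0 : (0:ℝ) ≤ C := by linarith
  cases subsingleton_or_nontrivial A with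
  | inl hsub =>
    intro i
    have : z i = 0 := Subsingleton.elim _ _
    rw [this, norm_zero]
    simpa using pow_nonneg hC0 (n - (i:ℕ))
  | inr hnt =>
    -- key recursive step
    have key : ∀ i : Fin n, (∀ j : Fin n, i < j → ‖z j‖ ^ 2 ≤ C ^ (n - (j:ℕ))) →
        ‖z i‖ ^ 2 ≤ C ^ (n - (i:ℕ)) := by
      intro i ihj
      set S : A := ∑ j ∈ Finset.Ioi i, z j * star (z j) with hS
      have heq : star (z i) * z i = ((1 - q : ℝ) : ℂ) • (1 - S) + (q : ℂ) • (z i * star (z i)) := by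
        rw [← hrel i]; abel
      have hnorm1 : ‖star (z i) * z i‖ = ‖z i‖ ^ 2 := by
        rw [CStarRing.norm_star_mul_self, sq]
      have hnorm2 : ‖z i * star (z i)‖ = ‖z i‖ ^ 2 := by
        rw [CStarRing.norm_self_mul_star, sq]
      have hsmul1 : ‖((1 - q : ℝ) : ℂ) • (1 - S)‖ = (1 - q) * ‖(1 : A) - S‖ := by
        rw [norm_smul, Complex.norm_real, Real.norm_of_nonneg (le_of_lt hq)]
      have hsmul2 : ‖(q : ℂ) • (z i * star (z i))‖ = q * ‖z i‖ ^ 2 := by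
        rw [norm_smul, Complex.norm_real, Real.norm_of_nonneg (le_of_lt hq0), hnorm2]
      have hSb : ‖S‖ ≤ ∑ j ∈ Finset.Ioi i, ‖z j‖ ^ 2 := by
        calc ‖S‖ ≤ ∑ j ∈ Finset.Ioi i, ‖z j * star (z j)‖ := norm_sum_le _ _
          _ = ∑ j ∈ Finset.Ioi i, ‖z j‖ ^ 2 := by
              refine Finset.sum_congr rfl fun j _ => ?_
              rw [CStarRing.norm_self_mul_star, sq]
      have h1S : ‖(1 : A) - S‖ ≤ 1 + ‖S‖ := by
        calc ‖(1:A) - S‖ ≤ ‖(1:A)‖ + ‖S‖ := norm_sub_le _ _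
          _ = 1 + ‖S‖ := by rw [norm_one]
      have hmain : ‖z i‖ ^ 2 ≤ (1 - q) * (1 + ‖S‖) + q * ‖z i‖ ^ 2 := by
        calc ‖z i‖ ^ 2 = ‖star (z i) * z i‖ := hnorm1.symm
          _ ≤ ‖((1 - q : ℝ) : ℂ) • (1 - S)‖ + ‖(q : ℂ) • (z i * star (z i))‖ := by
              rw [heq]; exact norm_add_le _ _
          _ = (1 - q) * ‖(1 : A) - S‖ + q * ‖z i‖ ^ 2 := by rw [hsmul1, hsmul2]
          _ ≤ (1 - q) * (1 + ‖S‖) + q * ‖z i‖ ^ 2 := by nlinarith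
      have hstep : ‖z i‖ ^ 2 ≤ 1 + ‖S‖ := by nlinarith
      -- bound the sum
      have hsum1 : ∑ j ∈ Finset.Ioi i, ‖z j‖ ^ 2 ≤ ∑ j ∈ Finset.Ioi i, C ^ (n - (j:ℕ)) :=
        Finset.sum_le_sum fun j hj => ihj j (Finset.mem_Ioi.mp hj)
      have hsum2 : ∑ j ∈ Finset.Ioi i, C ^ (n - (j:ℕ)) ≤ ∑ m ∈ Finset.Ico 1 (n - (i:ℕ)), C ^ m := by
        have hinj : ∀ x ∈ Finset.Ioi i, ∀ y ∈ Finset.Ioi i,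
            (fun j : Fin n => n - (j:ℕ)) x = (fun j : Fin n => n - (j:ℕ)) y → x = y := by
          intro x hx y hy h
          have hx' := x.isLt; have hy' := y.isLt
          simp only at h
          exact Fin.ext (by omega)
        calc ∑ j ∈ Finset.Ioi i, C ^ (n - (j:ℕ))
            = ∑ m ∈ (Finset.Ioi i).image (fun j : Fin n => n - (j:ℕ)), C ^ m :=
              (Finset.sum_image hinj).symm
          _ ≤ ∑ m ∈ Finset.Ico 1 (n - (i:ℕ)), C ^ m := by
              refine Finset.sum_le_sum_of_subset_of_nonneg ?_ (fun m _ _ => by positivity)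
              intro m hm
              obtain ⟨j, hj, hjm⟩ := Finset.mem_image.mp hm
              have hj' : i < j := Finset.mem_Ioi.mp hj
              have h3 : (i:ℕ) < (j:ℕ) := hj'
              have h2 := j.isLt
              exact Finset.mem_Ico.mpr ⟨by omega, by omega⟩
      have hgeom := geom_aux hC (n - (i:ℕ))
      linarith [hSb.trans hsum1]
    -- reverse strong induction
    have main : ∀ k : ℕ, ∀ i : Fin n, n - (i:ℕ) ≤ k → ‖z i‖ ^ 2 ≤ C ^ (n - (i:ℕ)) := by
      intro k
      induction k with
      | zero => intro i hi; exact absurd hi (by have := i.isLt; omega)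
      | succ k ih =>
        intro i hi
        refine key i fun j hj => ih j ?_
        have h3 : (i:ℕ) < (j:ℕ) := hj
        have := j.isLt
        omega
    intro i
    exact main n i (by omega)
end

section
/- Let A be a unital C*-algebra, 0 < q < 1, and x₁,…,xₙ ∈ A satisfy xᵢxⱼ = q^{1/2} xⱼxᵢ for i < j. On A ⊗ B(ℓ²(ℕ)) define Xⱼ = xⱼ ⊗ D for j ≤ n where D = Σ_k q^{k/2} E_{kk}, and X_{n+1} = 1 ⊗ W where W is the weighted shift W ξ_k = √(1−q^{k+1}) ξ_{k+1}. Then Xᵢ Xⱼ = q^{1/2} Xⱼ Xᵢ for all 1 ≤ i < j ≤ n+1. -/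
open scoped TensorProduct

theorem double_suspension_generators_q_commute
    {A : Type*} [CStarAlgebra A]
    {H : Type*} [NormedAddCommGroup H] [InnerProductSpace ℂ H] [CompleteSpace H]
    (b : HilbertBasis ℕ ℂ H) (q : ℝ) (hq0 : 0 < q) (hq1 : q < 1)
    (n : ℕ) (x : Fin n → A)
    (hx : ∀ i j : Fin n, i < j → x i * x j = ((Real.sqrt q : ℝ) : ℂ) • (x j * x i))
    (D W : H →L[ℂ] H)
    (hD : ∀ k : ℕ, D (b k) = ((Real.sqrt q ^ k : ℝ) : ℂ) • b k)
    (hW : ∀ k : ℕ, W (b k) = ((Real.sqrt (1 - q ^ (k + 1)) : ℝ) : ℂ) • b (k + 1))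
    (X : Fin (n + 1) → A ⊗[ℂ] (H →L[ℂ] H))
    (hXj : ∀ j : Fin n, X j.castSucc = x j ⊗ₜ[ℂ] D)
    (hXlast : X (Fin.last n) = (1 : A) ⊗ₜ[ℂ] W) :
    ∀ i j : Fin (n + 1), i < j → X i * X j = ((Real.sqrt q : ℝ) : ℂ) • (X j * X i) := by
  have hDW : D * W = ((Real.sqrt q : ℝ) : ℂ) • (W * D) := by
    apply ContinuousLinearMap.ext_on (Submodule.dense_iff_topologicalClosure_eq_top.mpr b.dense_span)
    rintro _ ⟨k, rfl⟩
    have : (D * W) (b k) = D (W (b k)) := rfl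
    rw [this]
    have : (((Real.sqrt q : ℝ) : ℂ) • (W * D)) (b k)
        = ((Real.sqrt q : ℝ) : ℂ) • W (D (b k)) := rfl
    rw [this, hW k, hD k, map_smul, map_smul, hD (k + 1), hW k]
    simp only [smul_smul]
    congr 1
    push_cast
    ring
  intro i j hij
  rcases Fin.eq_castSucc_or_eq_last j with ⟨j', rfl⟩ | rfl
  · rcases Fin.eq_castSucc_or_eq_last i with ⟨i', rfl⟩ | rfl
    · have hij3 : i' < j' := by
        simpa [Fin.castSucc_lt_castSucc_iff] using hij
      rw [hXj i', hXj j', Algebra.TensorProduct.tmul_mul_tmul,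
        Algebra.TensorProduct.tmul_mul_tmul, hx i' j' hij3,
        TensorProduct.smul_tmul']
    · exact absurd (hij.trans (Fin.castSucc_lt_last j')) (lt_irrefl _)
  · rcases Fin.eq_castSucc_or_eq_last i with ⟨i', rfl⟩ | rfl
    · rw [hXlast, hXj i', Algebra.TensorProduct.tmul_mul_tmul,
        Algebra.TensorProduct.tmul_mul_tmul, one_mul, mul_one, hDW,
        TensorProduct.tmul_smul]
    · exact absurd hij (lt_irrefl _)
end

section
/- Let A be a unital C*-algebra, 0 < q < 1, and x₁,…,xₙ ∈ A. In A ⊗ B(ℓ²(ℕ)), set Xⱼ = xⱼ ⊗ D for j = 1,…,n (D = Σ_k q^{k/2} E_{kk}) and X_{n+1} = 1 ⊗ W (W the weighted shift with weights √(1−q^{k+1})). Then 1 − Σ_{j=1}^{n+1} Xⱼ Xⱼ* = (1 − Σ_{j=1}^n xⱼxⱼ*) ⊗ Σ_{k≥0} q^k E_{kk}. -/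
/-! On the basis, `W*` shifts down (killing `b 0`) with the same weights, so `W W*` and `D D*` are
diagonal with eigenvalues `1 - q ^ k` and `q ^ k`: that is, `D D* = E` and `W W* = 1 - E`. The
identity is then linear algebra in `A ⊗ B(H)`. -/

open scoped TensorProduct InnerProductSpace ComplexConjugate

namespace HilbertBasis

variable {ι κ 𝕜 E F : Type*} [RCLike 𝕜]
  [NormedAddCommGroup E] [InnerProductSpace 𝕜 E]

theorem ext_inner_left (b : HilbertBasis ι 𝕜 E) {x y : E} (h : ∀ i, ⟪b i, x⟫_𝕜 = ⟪b i, y⟫_𝕜) :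
    x = y :=
  b.repr.injective <| lp.ext <| funext fun i => by simp only [b.repr_apply_apply, h]

theorem ext_continuousLinearMap {G : Type*} [TopologicalSpace G] [AddCommGroup G] [Module 𝕜 G]
    [T2Space G] (b : HilbertBasis ι 𝕜 E) {f g : E →L[𝕜] G} (h : ∀ i, f (b i) = g (b i)) :
    f = g :=
  ContinuousLinearMap.ext_on (Submodule.dense_iff_topologicalClosure_eq_top.mpr b.dense_span)
    (by rintro _ ⟨i, rfl⟩; exact h i)

variable [CompleteSpace E] [NormedAddCommGroup F] [InnerProductSpace 𝕜 F] [CompleteSpace F]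
  (b : HilbertBasis ι 𝕜 E) (c : HilbertBasis κ 𝕜 F) {σ : ι → κ} {w : ι → 𝕜}
  {T : E →L[𝕜] F}

open ContinuousLinearMap

theorem adjoint_apply_eq_zero_of_notMem_range (hT : ∀ i, T (b i) = w i • c (σ i)) {k : κ}
    (hk : k ∉ Set.range σ) : adjoint T (c k) = 0 := by
  refine b.ext_inner_left fun i => ?_
  have hne : σ i ≠ k := fun h => hk ⟨i, h⟩
  rw [adjoint_inner_right, hT, inner_smul_left, c.orthonormal.inner_eq_zero hne, inner_zero_right,
    mul_zero]

theorem adjoint_apply_of_map_eq_smul (hσ : Function.Injective σ)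
    (hT : ∀ i, T (b i) = w i • c (σ i)) (i : ι) : adjoint T (c (σ i)) = conj (w i) • b i := by
  refine b.ext_inner_left fun j => ?_
  rw [adjoint_inner_right, hT, inner_smul_left, inner_smul_right]
  rcases eq_or_ne j i with rfl | hji
  · simp [c.orthonormal.1, b.orthonormal.1]
  · rw [c.orthonormal.inner_eq_zero (hσ.ne hji), b.orthonormal.inner_eq_zero hji, mul_zero,
      mul_zero]

theorem comp_adjoint_apply_of_map_eq_smul (hσ : Function.Injective σ)
    (hT : ∀ i, T (b i) = w i • c (σ i)) (i : ι) :
    (T ∘L adjoint T) (c (σ i)) = ((‖w i‖ ^ 2 : ℝ) : 𝕜) • c (σ i) := by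
  rw [comp_apply, b.adjoint_apply_of_map_eq_smul c hσ hT, map_smul, hT, smul_smul,
    RCLike.conj_mul]
  norm_cast

end HilbertBasis

theorem Algebra.TensorProduct.one_sub_tmul_sub_tmul_one_sub {R A B : Type*} [CommRing R]
    [Ring A] [Ring B] [Algebra R A] [Algebra R B] (a : A) (e : B) :
    (1 : A ⊗[R] B) - a ⊗ₜ[R] e - (1 : A) ⊗ₜ[R] (1 - e) = (1 - a) ⊗ₜ[R] e := by
  rw [TensorProduct.tmul_sub, TensorProduct.sub_tmul, Algebra.TensorProduct.one_def]
  abel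

open ContinuousLinearMap in
theorem double_suspension_radius_identity
    {A : Type*} [CStarAlgebra A]
    {H : Type*} [NormedAddCommGroup H] [InnerProductSpace ℂ H] [CompleteSpace H]
    (b : HilbertBasis ℕ ℂ H) (q : ℝ) (hq0 : 0 < q) (hq1 : q < 1)
    (n : ℕ) (x : Fin n → A)
    (D W E : H →L[ℂ] H)
    (hD : ∀ k : ℕ, D (b k) = ((Real.sqrt q ^ k : ℝ) : ℂ) • b k)
    (hW : ∀ k : ℕ, W (b k) = ((Real.sqrt (1 - q ^ (k + 1)) : ℝ) : ℂ) • b (k + 1))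
    (hE : ∀ k : ℕ, E (b k) = ((q ^ k : ℝ) : ℂ) • b k) :
    (1 : A ⊗[ℂ] (H →L[ℂ] H))
        - (∑ j : Fin n, (x j * star (x j)) ⊗ₜ[ℂ] (D ∘L adjoint D))
        - (1 : A) ⊗ₜ[ℂ] (W ∘L adjoint W)
      = ((1 : A) - ∑ j : Fin n, x j * star (x j)) ⊗ₜ[ℂ] E := by
  have hDD : D ∘L adjoint D = E := b.ext_continuousLinearMap fun k => by
    refine (b.comp_adjoint_apply_of_map_eq_smul b Function.injective_id hD k).trans ?_
    rw [hE, Complex.norm_real, Real.norm_eq_abs, sq_abs, ← pow_mul, mul_comm, pow_mul,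
      Real.sq_sqrt hq0.le]
    rfl
  have hWW : W ∘L adjoint W = 1 - E := b.ext_continuousLinearMap fun k => by
    rcases k with _ | k
    · rw [comp_apply, b.adjoint_apply_eq_zero_of_notMem_range b hW (by simp)]
      simp [hE 0]
    · have hqk : q ^ (k + 1) ≤ 1 := pow_le_one₀ hq0.le hq1.le
      rw [b.comp_adjoint_apply_of_map_eq_smul b (add_left_injective 1) hW k, sub_apply,
        one_apply_eq_self, hE, Complex.norm_real, Real.norm_eq_abs, sq_abs,
        Real.sq_sqrt (sub_nonneg.2 hqk)]
      push_cast
      module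
  rw [hDD, hWW, ← TensorProduct.sum_tmul]
  exact Algebra.TensorProduct.one_sub_tmul_sub_tmul_one_sub _ E
end

section
/- Let H be a Hilbert space, T ∈ B(H) an isometry, and suppose T is unitary (i.e. also T T* = 1). Let Z ∈ B(H) satisfy Z = T·(Z*Z)^{1/2} and Z*Z − q Z Z* = (1−q)·1 for some 0 < q < 1. If Z is invertible, then Z is unitary and Z = T. -/
open Pointwise


set_option synthInstance.maxHeartbeats 400000
theorem unitary_part_forces_Z_eq_T
    {H : Type*} [NormedAddCommGroup H] [InnerProductSpace ℂ H] [CompleteSpace H]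
    (q : ℝ) (hq0 : 0 < q) (hq1 : q < 1) (T Z : H →L[ℂ] H)
    (hT_isom : star T * T = 1) (hT_unit : T * star T = 1)
    (hZ : Z = T * CFC.sqrt (star Z * Z))
    (hrel : star Z * Z - (q : ℂ) • (Z * star Z) = ((1 - q : ℝ) : ℂ) • 1)
    (hinv : IsUnit Z) :
    (star Z * Z = 1 ∧ Z * star Z = 1) ∧ Z = T := by
  obtain ⟨u, hu⟩ := hinv
  set A : H →L[ℂ] H := star Z * Z with hA
  set C : H →L[ℂ] H := A - 1 with hCdef
  have hqC : (q : ℂ) ≠ 0 := by exact_mod_cast hq0.ne'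
  have h1 : (u : H →L[ℂ] H) * (↑u⁻¹ : H →L[ℂ] H) = 1 := u.mul_inv
  -- Z Z* is conjugate to Z* Z
  have hB : (u : H →L[ℂ] H) * A * (↑u⁻¹ : H →L[ℂ] H) = Z * star Z := by
    calc (u : H →L[ℂ] H) * A * (↑u⁻¹ : H →L[ℂ] H)
        = (Z * star Z) * ((u : H →L[ℂ] H) * (↑u⁻¹ : H →L[ℂ] H)) := by
          rw [hu, hA]; simp only [mul_assoc]
      _ = Z * star Z := by rw [h1, mul_one]
  -- key identity : C = q • (u * C * u⁻¹)
  have hC : C = (q : ℂ) • ((u : H →L[ℂ] H) * C * (↑u⁻¹ : H →L[ℂ] H)) := by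
    have h2 : (u : H →L[ℂ] H) * C * (↑u⁻¹ : H →L[ℂ] H) = Z * star Z - 1 := by
      rw [hCdef, mul_sub, sub_mul, hB, mul_one, h1]
    rw [h2, smul_sub, hCdef]
    have h3 : A = (q : ℂ) • (Z * star Z) + ((1 - q : ℝ) : ℂ) • 1 := by
      rw [← hrel]; abel
    rw [h3]
    push_cast
    module
  -- C is selfadjoint
  have hCsa : IsSelfAdjoint C := by
    have : IsSelfAdjoint A := by
      rw [hA]; exact IsSelfAdjoint.star_mul_self Z
    simpa [hCdef] using this.sub (IsSelfAdjoint.one (H →L[ℂ] H))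
  -- spectrum of C is scaled by q
  have hspec : spectrum ℂ C = (Units.mk0 (q : ℂ) hqC) • spectrum ℂ C := by
    conv_lhs => rw [hC]
    rw [show ((q : ℂ) • ((u : H →L[ℂ] H) * C * (↑u⁻¹ : H →L[ℂ] H)))
        = (Units.mk0 (q : ℂ) hqC : ℂˣ) • ((u : H →L[ℂ] H) * C * (↑u⁻¹ : H →L[ℂ] H)) from rfl,
      spectrum.unit_smul_eq_smul, spectrum.units_conjugate]
  -- conclude C = 0
  have hC0 : C = 0 := by
    rcases subsingleton_or_nontrivial (H →L[ℂ] H) with hs | hnt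
    · exact Subsingleton.elim _ _
    by_contra hne
    obtain ⟨k, hk, hknorm⟩ := spectrum.exists_nnnorm_eq_spectralRadius C
    rw [hCsa.spectralRadius_eq_nnnorm] at hknorm
    have hkC : ‖k‖ = ‖C‖ := by
      have h4 : ‖k‖₊ = ‖C‖₊ := ENNReal.coe_injective hknorm
      simpa using congrArg NNReal.toReal h4
    rw [hspec] at hk
    obtain ⟨k', hk', rfl⟩ := hk
    have hk'le : ‖k'‖ ≤ ‖C‖ := spectrum.norm_le_norm_of_mem hk'
    have hCpos : 0 < ‖C‖ := norm_pos_iff.mpr hne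
    have hkC' : q * ‖k'‖ = ‖C‖ := by
      simpa [Units.smul_def, norm_smul, abs_of_pos hq0] using hkC
    nlinarith
  have hA1 : A = 1 := by rwa [hCdef, sub_eq_zero] at hC0
  have hZZ' : Z * star Z = 1 := by
    have h2 : (q : ℂ) • (Z * star Z) = (q : ℂ) • (1 : H →L[ℂ] H) := by
      have h3 := hrel
      rw [hA1] at h3
      push_cast at h3 ⊢
      linear_combination (norm := module) -h3
    exact smul_right_injective _ hqC h2
  refine ⟨⟨hA1, hZZ'⟩, ?_⟩
  rw [hZ, hA1, CFC.sqrt_one, mul_one]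
end

section
/- Let A be a unital C*-algebra, 0 < q < 1, and z₁,…,zₙ ∈ A self-adjoint-free generators satisfying the relations of Theorem 3.1 (zᵢzⱼ = q^{1/2}zⱼzᵢ, zᵢzⱼ* = q^{−1/2}zⱼ*zᵢ for i < j, and zᵢ*zᵢ − q zᵢzᵢ* = (1−q)(1 − Σ_{j>i} zⱼzⱼ*)). Then the element r = 1 − Σ_{j=1}^n zⱼzⱼ* satisfies r^{1/2} zᵢ = q^{1/2} zᵢ r^{1/2} for all i = 1,…,n. (It suffices to prove r zᵢ = q zᵢ r, since r ≥ 0 and the square root is a norm-limit of polynomials in r.) -/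
/-!
Write `P j = z j * star (z j)` and `r = 1 - ∑ j, P j`. The relations move each `P j` past `z i`:
it commutes with `z i` for `j > i`, picks up the factor `q` for `j < i`, and for `j = i` the
third relation gives `P i * z i = q • z i * P i + (1 - q) • z i * (1 - ∑_{j > i} P j)`. The last
term exactly makes up the missing `(1 - q) • z i * P j` for `j > i`, leaving `(1 - q) • z i`,
so `r * z i = q • (z i * r)`. Thus `z i` intertwines the selfadjoint elements `q • r` and `r`,
hence also `f (q • r)` and `f r` for every continuous `f` (approximate `f` uniformly by
polynomials on the union of the spectra); for `f = √` this is the claim, as `√(q • r) = √q • √r`.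
-/

open Finset

section Intertwining

variable {A : Type*} [Ring A] [StarRing A] [Algebra ℝ A] [TopologicalSpace A]
  [ContinuousFunctionalCalculus ℝ A IsSelfAdjoint] [IsTopologicalRing A] [T2Space A]

theorem SemiconjBy.cfcHomSuperset {a b w : A} (ha : IsSelfAdjoint a) (hb : IsSelfAdjoint b)
    {s : Set ℝ} [CompactSpace s] (has : spectrum ℝ a ⊆ s) (hbs : spectrum ℝ b ⊆ s)
    (h : SemiconjBy w a b) (f : C(s, ℝ)) :
    SemiconjBy w (_root_.cfcHomSuperset ha has f) (_root_.cfcHomSuperset hb hbs f) := by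
  induction f using ContinuousMap.induction_on_of_compact with
  | const r =>
    have hr : ContinuousMap.const s r = algebraMap ℝ C(s, ℝ) r := rfl
    simp only [hr, AlgHomClass.commutes]
    exact Algebra.commute_algebraMap_right r w
  | id => rwa [cfcHomSuperset_id, cfcHomSuperset_id]
  | star_id => rwa [star_trivial, cfcHomSuperset_id, cfcHomSuperset_id]
  | add f g hf hg => rw [map_add, map_add]; exact hf.add_right hg
  | mul f g hf hg => rw [map_mul, map_mul]; exact hf.mul_right hg
  | frequently f hf =>
    have hclosed : IsClosed {g : C(s, ℝ) | SemiconjBy w (_root_.cfcHomSuperset ha has g)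
        (_root_.cfcHomSuperset hb hbs g)} :=
      isClosed_eq (continuous_const.mul (cfcHomSuperset_continuous ha has))
        ((cfcHomSuperset_continuous hb hbs).mul continuous_const)
    exact hclosed.mem_of_frequently_of_tendsto hf Filter.tendsto_id

theorem SemiconjBy.cfc_real {a b w : A} (ha : IsSelfAdjoint a) (hb : IsSelfAdjoint b)
    (h : SemiconjBy w a b) (f : ℝ → ℝ) (hf : ContinuousOn f (spectrum ℝ a ∪ spectrum ℝ b)) :
    SemiconjBy w (cfc f a) (cfc f b) := by
  set s := spectrum ℝ a ∪ spectrum ℝ b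
  have : CompactSpace s := isCompact_iff_compactSpace.mp <|
    (ContinuousFunctionalCalculus.isCompact_spectrum a).union
      (ContinuousFunctionalCalculus.isCompact_spectrum b)
  have has : spectrum ℝ a ⊆ s := Set.subset_union_left
  have hbs : spectrum ℝ b ⊆ s := Set.subset_union_right
  convert h.cfcHomSuperset ha hb has hbs ⟨_, hf.domRestrict⟩ using 1
  · rw [cfc_apply f a ha (hf.mono has)]; rfl
  · rw [cfc_apply f b hb (hf.mono hbs)]; rfl

end Intertwining

theorem CFC.sqrt_mul_eq_smul_mul_sqrt {A : Type*} [CStarAlgebra A] [PartialOrder A]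
    [StarOrderedRing A] {a w : A} (ha : IsSelfAdjoint a) {t : ℝ} (ht : 0 ≤ t)
    (h : a * w = t • (w * a)) :
    CFC.sqrt a * w = √t • (w * CFC.sqrt a) := by
  by_cases ha0 : 0 ≤ a
  swap
  · simp [CFC.sqrt_of_not_nonneg ha0]
  have hta : 0 ≤ t • a := smul_nonneg ht ha0
  have hsqrt_smul : CFC.sqrt (t • a) = √t • CFC.sqrt a := by
    refine CFC.sqrt_unique ?_ (smul_nonneg (Real.sqrt_nonneg t) (CFC.sqrt_nonneg a))
    rw [smul_mul_smul_comm, Real.mul_self_sqrt ht, CFC.sqrt_mul_sqrt_self a]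
  have hsqrt_eq_cfc : ∀ x : A, 0 ≤ x → CFC.sqrt x = cfc Real.sqrt x := fun x hx => by
    rw [CFC.sqrt_eq_real_sqrt x hx, cfcₙ_eq_cfc]
  have hsemi : SemiconjBy w (t • a) a := by
    rw [SemiconjBy, mul_smul_comm, h]
  calc CFC.sqrt a * w = w * CFC.sqrt (t • a) := by
        rw [hsqrt_eq_cfc a ha0, hsqrt_eq_cfc _ hta]
        exact (hsemi.cfc_real ((IsSelfAdjoint.all t).smul ha) ha _
          Real.continuous_sqrt.continuousOn).eq.symm
    _ = √t • (w * CFC.sqrt a) := by rw [hsqrt_smul, mul_smul_comm]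

structure QSphereRelations {A : Type*} [Ring A] [StarRing A] [Algebra ℂ A] {n : ℕ}
    (q : ℝ) (z : Fin n → A) : Prop where
  mul_comm_of_lt : ∀ i j : Fin n, i < j → z i * z j = ((√q : ℝ) : ℂ) • (z j * z i)
  mul_star_comm_of_lt : ∀ i j : Fin n, i < j →
    z i * star (z j) = (((√q)⁻¹ : ℝ) : ℂ) • (star (z j) * z i)
  star_mul_self_sub : ∀ i : Fin n, star (z i) * z i - (q : ℂ) • (z i * star (z i)) =
    ((1 - q : ℝ) : ℂ) • (1 - ∑ j ∈ Ioi i, z j * star (z j))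

namespace QSphereRelations

variable {A : Type*} [Ring A] [StarRing A] [Algebra ℂ A] {n : ℕ} {q : ℝ} {z : Fin n → A}

theorem mul_star_mul_self (hz : QSphereRelations q z) (i : Fin n) :
    z i * star (z i) * z i = (q : ℂ) • (z i * (z i * star (z i)))
      + (1 - (q : ℂ)) • (z i - ∑ j ∈ Ioi i, z i * (z j * star (z j))) := by
  have h := sub_eq_iff_eq_add.mp (hz.star_mul_self_sub i)
  push_cast at h
  rw [mul_assoc, h, mul_add, mul_smul_comm, mul_smul_comm, mul_sub, mul_one, mul_sum, add_comm]

variable [StarModule ℂ A]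

theorem star_mul_comm (hz : QSphereRelations q z) (hq : 0 < q) {i j : Fin n} (hij : i ≠ j) :
    star (z j) * z i = ((√q : ℝ) : ℂ) • (z i * star (z j)) := by
  have hc : ((√q : ℝ) : ℂ) ≠ 0 := by exact_mod_cast (Real.sqrt_pos.mpr hq).ne'
  rcases hij.lt_or_gt with h | h
  · rw [hz.mul_star_comm_of_lt i j h, Complex.ofReal_inv, smul_smul, mul_inv_cancel₀ hc,
      one_smul]
  · have h' := congrArg star (hz.mul_star_comm_of_lt j i h)
    simp only [star_mul, star_star, star_smul, Complex.star_def, Complex.conj_ofReal] at h'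
    rw [h', Complex.ofReal_inv, smul_smul, mul_inv_cancel₀ hc, one_smul]

theorem mul_star_mul_of_lt (hz : QSphereRelations q z) (hq : 0 < q) {i j : Fin n} (h : i < j) :
    z j * star (z j) * z i = z i * (z j * star (z j)) := by
  rw [mul_assoc, hz.star_mul_comm hq h.ne, mul_smul_comm, ← mul_assoc, ← smul_mul_assoc,
    ← hz.mul_comm_of_lt i j h, mul_assoc]

theorem mul_star_mul_of_gt (hz : QSphereRelations q z) (hq : 0 < q) {i j : Fin n} (h : j < i) :
    z j * star (z j) * z i = (q : ℂ) • (z i * (z j * star (z j))) := by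
  have hcc : ((√q : ℝ) : ℂ) * ((√q : ℝ) : ℂ) = q := by
    exact_mod_cast Real.mul_self_sqrt hq.le
  rw [mul_assoc, hz.star_mul_comm hq h.ne', mul_smul_comm, ← mul_assoc, hz.mul_comm_of_lt j i h,
    smul_mul_assoc, smul_smul, hcc, mul_assoc]

theorem sum_mul_star_mul_sub (hz : QSphereRelations q z) (hq : 0 < q) (i : Fin n) :
    ∑ j, (z j * star (z j) * z i - (q : ℂ) • (z i * (z j * star (z j))))
      = (1 - (q : ℂ)) • z i := by
  rw [← sum_subset (subset_univ (Ici i)) fun j _ hj => ?_]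
  · have hgt : ∀ j ∈ Ioi i, z j * star (z j) * z i - (q : ℂ) • (z i * (z j * star (z j)))
        = (1 - (q : ℂ)) • (z i * (z j * star (z j))) := fun j hj => by
      rw [hz.mul_star_mul_of_lt hq (mem_Ioi.mp hj), sub_smul, one_smul]
    rw [← Ioi_insert, sum_insert notMem_Ioi_self, sum_congr rfl hgt, ← smul_sum,
      hz.mul_star_mul_self i, smul_sub]
    abel
  · rw [hz.mul_star_mul_of_gt hq (not_le.mp (by simpa using hj)), sub_self]

theorem one_sub_sum_mul_star_mul (hz : QSphereRelations q z) (hq : 0 < q) (i : Fin n) :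
    (1 - ∑ j, z j * star (z j)) * z i = (q : ℂ) • (z i * (1 - ∑ j, z j * star (z j))) := by
  have h := hz.sum_mul_star_mul_sub hq i
  rw [sum_sub_distrib, ← sum_mul, ← smul_sum, ← mul_sum] at h
  rw [sub_mul, one_mul, mul_sub, mul_one, smul_sub, sub_eq_iff_eq_add.mp h, sub_smul, one_smul]
  abel

end QSphereRelations

theorem sqrt_defect_q_commutes_with_generators_general
    {A : Type*} [CStarAlgebra A] [PartialOrder A] [StarOrderedRing A]
    (n : ℕ) (q : ℝ) (hq0 : 0 < q) (z : Fin n → A)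
    (hcomm : ∀ i j : Fin n, i < j → z i * z j = ((Real.sqrt q : ℝ) : ℂ) • (z j * z i))
    (hcomm' : ∀ i j : Fin n, i < j →
      z i * star (z j) = (((Real.sqrt q)⁻¹ : ℝ) : ℂ) • (star (z j) * z i))
    (hrel : ∀ i : Fin n, star (z i) * z i - (q : ℂ) • (z i * star (z i)) =
      ((1 - q : ℝ) : ℂ) • (1 - ∑ j ∈ Finset.Ioi i, z j * star (z j))) :
    ∀ i : Fin n,
      CFC.sqrt (1 - ∑ j : Fin n, z j * star (z j)) * z i
        = ((Real.sqrt q : ℝ) : ℂ) • (z i * CFC.sqrt (1 - ∑ j : Fin n, z j * star (z j))) := by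
  intro i
  have hz : QSphereRelations q z := ⟨hcomm, hcomm', hrel⟩
  have hdefect_selfAdjoint : IsSelfAdjoint (1 - ∑ j, z j * star (z j)) :=
    (IsSelfAdjoint.one A).sub (isSelfAdjoint_sum _ fun j _ => .mul_star_self (z j))
  have hdefect_mul := hz.one_sub_sum_mul_star_mul hq0 i
  rw [Complex.coe_smul] at hdefect_mul ⊢
  exact CFC.sqrt_mul_eq_smul_mul_sqrt hdefect_selfAdjoint hq0.le hdefect_mul

theorem sqrt_defect_q_commutes_with_generators
    {A : Type*} [CStarAlgebra A] [PartialOrder A] [StarOrderedRing A]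
    (n : ℕ) (q : ℝ) (hq0 : 0 < q) (hq1 : q < 1) (z : Fin n → A)
    (hcomm : ∀ i j : Fin n, i < j → z i * z j = ((Real.sqrt q : ℝ) : ℂ) • (z j * z i))
    (hcomm' : ∀ i j : Fin n, i < j →
      z i * star (z j) = (((Real.sqrt q)⁻¹ : ℝ) : ℂ) • (star (z j) * z i))
    (hrel : ∀ i : Fin n, star (z i) * z i - (q : ℂ) • (z i * star (z i)) =
      ((1 - q : ℝ) : ℂ) • (1 - ∑ j ∈ Finset.Ioi i, z j * star (z j))) :
    ∀ i : Fin n,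
      CFC.sqrt (1 - ∑ j : Fin n, z j * star (z j)) * z i
        = ((Real.sqrt q : ℝ) : ℂ) • (z i * CFC.sqrt (1 - ∑ j : Fin n, z j * star (z j))) :=
  sqrt_defect_q_commutes_with_generators_general n q hq0 z hcomm hcomm' hrel
end

section
/- Let 0 < q < 1, μ² = q, and let a₁,…,aₙ be elements of a *-algebra satisfying the TCCR relations: aⱼaᵢ = μ aᵢaⱼ (i<j), aⱼaᵢ* = μ aᵢ*aⱼ (i≠j), and aᵢaᵢ* = 1 + μ²aᵢ*aᵢ − (1−μ²)Σ_{j>i} aⱼ*aⱼ. Define zᵢ = √(1−q)·aᵢ*. Then z₁,…,zₙ satisfy the quantum ball relations: zᵢzⱼ = q^{1/2} zⱼzᵢ and zᵢzⱼ* = q^{−1/2} zⱼ*zᵢ for i < j, and zᵢ*zᵢ − q zᵢzᵢ* = (1−q)(1 − Σ_{j>i} zⱼzⱼ*). -/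
theorem tccr_to_quantum_ball_relations
    {A : Type*} [Ring A] [StarRing A] [Algebra ℝ A] [StarModule ℝ A]
    (n : ℕ) (q μ : ℝ) (hq0 : 0 < q) (hq1 : q < 1) (hμ : 0 < μ) (hμq : μ ^ 2 = q)
    (a : Fin n → A)
    (h1 : ∀ i j : Fin n, i < j → a j * a i = μ • (a i * a j))
    (h2 : ∀ i j : Fin n, i ≠ j → a j * star (a i) = μ • (star (a i) * a j))
    (h3 : ∀ i : Fin n, a i * star (a i)
      = 1 + (μ ^ 2) • (star (a i) * a i)
        - (1 - μ ^ 2) • ∑ j ∈ Finset.Ioi i, star (a j) * a j)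
    (z : Fin n → A) (hz : ∀ i, z i = Real.sqrt (1 - q) • star (a i)) :
    (∀ i j : Fin n, i < j → z i * z j = Real.sqrt q • (z j * z i))
      ∧ (∀ i j : Fin n, i < j →
          z i * star (z j) = (Real.sqrt q)⁻¹ • (star (z j) * z i))
      ∧ (∀ i : Fin n, star (z i) * z i - q • (z i * star (z i))
          = (1 - q) • ((1 : A) - ∑ j ∈ Finset.Ioi i, z j * star (z j))) := by
  set c : ℝ := Real.sqrt (1 - q) with hc_def
  have hc : c * c = 1 - q := Real.mul_self_sqrt (by linarith)
  have hsq : Real.sqrt q = μ := by rw [← hμq]; exact Real.sqrt_sq hμ.le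
  have hμ0 : μ ≠ 0 := hμ.ne'
  have h1' : ∀ i j : Fin n, i < j →
      star (a i) * star (a j) = μ • (star (a j) * star (a i)) := by
    intro i j hij
    have := congrArg star (h1 i j hij)
    simpa [star_mul, star_smul] using this
  refine ⟨?_, ?_, ?_⟩
  · intro i j hij
    rw [hz, hz, hsq, smul_mul_smul_comm, h1' i j hij]
    rw [smul_mul_smul_comm]
    simp only [smul_smul]
    ring_nf
  · intro i j hij
    have h2' := h2 i j hij.ne
    simp only [hz, star_smul, star_star, star_trivial, smul_mul_smul_comm, h2',
      smul_smul]
    rw [hsq]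
    congr 1
    field_simp
  · intro i
    have h3' := h3 i
    rw [hμq] at h3'
    have hzz : ∀ j : Fin n, z j * star (z j) = (c * c) • (star (a j) * a j) := by
      intro j
      simp only [hz, star_smul, star_star, star_trivial, smul_mul_smul_comm]
    have hsz : star (z i) * z i = (c * c) • (a i * star (a i)) := by
      simp only [hz, star_smul, star_star, star_trivial, smul_mul_smul_comm]
    rw [hsz, hzz, h3']
    simp only [hzz, smul_sub, smul_add, smul_smul, Finset.smul_sum, ← Finset.sum_smul,
      smul_one]
    rw [hc]
    match_scalars <;> ring
end

section
/- Let H be a Hilbert space, 0 < q < 1, and Z ∈ B(H) satisfying Z*Z − q Z Z* = (1−q)·1, with polar decomposition Z = T|Z| (T an isometry). Then Z = T + Σ_{k=0}^∞ (√(1−q^{k+1}) − 1)·T^{k+1}(1−TT*)(T*)^k, where the series converges in norm. -/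
/-!
For an isometry `T` the elements `Q k = T^k (1 - T T*) T*^k` are mutually orthogonal projections
with `T Q k T* = Q (k + 1)`. Since `Z = T |Z|` gives `Z Z* = T (Z*Z) T*`, the defining relation says
that `Z*Z` is a fixed point of the contraction `X ↦ (1 - q) + q T X T*`; so is
`1 - ∑ q^(k+1) Q k`, hence the two agree. On the orthogonal family the square root is computed
termwise, `|Z| = 1 + ∑ (√(1 - q^(k+1)) - 1) Q k`, and `Z - T = T (|Z| - 1)`.
-/

open Finset

section WoldProjections

variable {R : Type*} [Ring R] [StarRing R] {T : R}

lemma IsStarProjection.mul_mul_star {p V : R} (hp : IsStarProjection p) (hV : star V * V = 1) :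
    IsStarProjection (V * p * star V) where
  isSelfAdjoint := by simp [IsSelfAdjoint, mul_assoc, hp.isSelfAdjoint.star_eq]
  isIdempotentElem := by
    have hcancel (x : R) : star V * (V * x) = x := by rw [← mul_assoc, hV, one_mul]
    rw [IsIdempotentElem]
    simp only [mul_assoc, hcancel]
    rw [← mul_assoc p p, hp.isIdempotentElem.eq]

variable (T) in
/-- For an isometry, the projection onto `T^k (ker T*)`, the `k`-th summand of the shift part of
the Wold decomposition. -/
def woldProj (k : ℕ) : R := T ^ k * (1 - T * star T) * star T ^ k

@[simp]
lemma woldProj_zero : woldProj T 0 = 1 - T * star T := by simp [woldProj]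

lemma mul_woldProj (k : ℕ) : T * woldProj T k = T ^ (k + 1) * (1 - T * star T) * star T ^ k := by
  simp only [woldProj, pow_succ', mul_assoc]

lemma mul_woldProj_mul_star (k : ℕ) : T * woldProj T k * star T = woldProj T (k + 1) := by
  rw [woldProj, woldProj, pow_succ' T k, pow_succ (star T) k]
  simp only [mul_assoc]

lemma isStarProjection_woldProj (hT : star T * T = 1) (k : ℕ) :
    IsStarProjection (woldProj T k) := by
  have hTT : IsStarProjection (T * star T) := by
    simpa using (IsStarProjection.one R).mul_mul_star hT
  simpa [woldProj, star_pow] using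
    hTT.one_sub.mul_mul_star (V := T ^ k) (by rw [star_pow, pow_mul_pow_eq_one k hT])

lemma woldProj_mul_woldProj_of_lt (hT : star T * T = 1) {j k : ℕ} (hjk : j < k) :
    woldProj T j * woldProj T k = 0 := by
  obtain ⟨m, rfl⟩ := Nat.exists_eq_add_of_lt hjk
  have hcancel : star T ^ j * T ^ (j + m + 1) = T * T ^ m := by
    rw [add_assoc, pow_add, ← mul_assoc, pow_mul_pow_eq_one j hT, one_mul, pow_succ']
  have hkill : (1 - T * star T) * T = 0 := by rw [sub_mul, mul_assoc, hT]; simp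
  calc woldProj T j * woldProj T (j + m + 1)
      = T ^ j * ((1 - T * star T) * (star T ^ j * T ^ (j + m + 1))) *
          ((1 - T * star T) * star T ^ (j + m + 1)) := by simp only [woldProj, mul_assoc]
    _ = 0 := by rw [hcancel, ← mul_assoc (1 - T * star T) T, hkill]; simp

lemma pairwise_woldProj_mul_eq_zero (hT : star T * T = 1) :
    Pairwise fun j k => woldProj T j * woldProj T k = 0 := by
  intro j k hjk
  rcases hjk.lt_or_gt with h | h
  · exact woldProj_mul_woldProj_of_lt hT h
  · simpa [(isStarProjection_woldProj hT _).isSelfAdjoint.star_eq] using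
      congr(star $(woldProj_mul_woldProj_of_lt hT h))

end WoldProjections

section OrthogonalProjections

lemma sum_smul_mul_sum_smul {ι R A : Type*} [CommSemiring R] [Semiring A] [Algebra R A]
    {Q : ι → A} (hidem : ∀ i, IsIdempotentElem (Q i))
    (horth : Pairwise fun i j => Q i * Q j = 0) (s : Finset ι) (a b : ι → R) :
    (∑ i ∈ s, a i • Q i) * (∑ i ∈ s, b i • Q i) = ∑ i ∈ s, (a i * b i) • Q i := by
  rw [sum_mul_sum]
  refine sum_congr rfl fun i hi => ?_
  rw [sum_eq_single_of_mem i hi fun j _ hji => by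
    rw [smul_mul_smul_comm, horth hji.symm, smul_zero], smul_mul_smul_comm, (hidem i).eq]

lemma one_add_sum_smul_mul_self {ι A : Type*} [Ring A] [Algebra ℂ A]
    {Q : ι → A} (hidem : ∀ i, IsIdempotentElem (Q i))
    (horth : Pairwise fun i j => Q i * Q j = 0) (s : Finset ι) {a b : ι → ℝ}
    (hab : ∀ i, (1 + a i) ^ 2 = 1 - b i) :
    (1 + ∑ i ∈ s, (a i : ℂ) • Q i) * (1 + ∑ i ∈ s, (a i : ℂ) • Q i) =
      1 - ∑ i ∈ s, (b i : ℂ) • Q i := by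
  have hcoeff (i : ι) : (a i : ℂ) + a i + a i * a i = -b i := by
    exact_mod_cast (by linear_combination hab i : a i + a i + a i * a i = -b i)
  calc (1 + ∑ i ∈ s, (a i : ℂ) • Q i) * (1 + ∑ i ∈ s, (a i : ℂ) • Q i)
      = 1 + (∑ i ∈ s, (a i : ℂ) • Q i + ∑ i ∈ s, (a i : ℂ) • Q i +
          (∑ i ∈ s, (a i : ℂ) • Q i) * (∑ i ∈ s, (a i : ℂ) • Q i)) := by noncomm_ring
    _ = 1 - ∑ i ∈ s, (b i : ℂ) • Q i := by
      simp only [sum_smul_mul_sum_smul hidem horth, ← sum_add_distrib, ← add_smul, hcoeff,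
        neg_smul, sum_neg_distrib, ← sub_eq_add_neg]

lemma isStarProjection_sum {ι R : Type*} [NonUnitalNonAssocSemiring R] [StarRing R]
    {Q : ι → R} (hQ : ∀ i, IsStarProjection (Q i))
    (horth : Pairwise fun i j => Q i * Q j = 0) (s : Finset ι) :
    IsStarProjection (∑ i ∈ s, Q i) := by
  classical
  induction s using Finset.induction_on with
  | empty => rw [sum_empty]; exact IsStarProjection.zero R
  | insert i s hi ih =>
    rw [sum_insert hi]
    refine (hQ i).add ih ?_
    rw [mul_sum]
    exact sum_eq_zero fun j hj => horth (ne_of_mem_of_not_mem hj hi).symm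

variable {A : Type*} [CStarAlgebra A]

lemma summable_ofReal_smul_of_isStarProjection {ι : Type*} {Q : ι → A}
    (hQ : ∀ i, IsStarProjection (Q i)) {a : ι → ℝ} (ha : Summable fun i => |a i|) :
    Summable fun i => (a i : ℂ) • Q i :=
  .of_norm_bounded ha fun i => by
    rw [norm_smul, Complex.norm_real, Real.norm_eq_abs]
    exact mul_le_of_le_one_right (abs_nonneg _) ((hQ i).norm_le)

variable [PartialOrder A] [StarOrderedRing A]

lemma one_add_sum_smul_nonneg {ι : Type*} {Q : ι → A} (hQ : ∀ i, IsStarProjection (Q i))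
    (horth : Pairwise fun i j => Q i * Q j = 0) (s : Finset ι) {a : ι → ℝ}
    (ha : ∀ i, 0 ≤ 1 + a i) : 0 ≤ 1 + ∑ i ∈ s, (a i : ℂ) • Q i := by
  have hsplit :
      1 + ∑ i ∈ s, (a i : ℂ) • Q i = (1 - ∑ i ∈ s, Q i) + ∑ i ∈ s, (1 + a i) • Q i := by
    simp only [Complex.coe_smul, add_smul, one_smul, sum_add_distrib]
    abel
  rw [hsplit]
  exact add_nonneg (isStarProjection_sum hQ horth s).one_sub_nonneg
    (sum_nonneg fun i _ => smul_nonneg (ha i) (hQ i).nonneg)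

lemma CFC.sqrt_one_sub_eq_one_add_of_hasSum {Q : ℕ → A} (hQ : ∀ k, IsStarProjection (Q k))
    (horth : Pairwise fun j k => Q j * Q k = 0) {a b : ℕ → ℝ} (ha : ∀ k, 0 ≤ 1 + a k)
    (hab : ∀ k, (1 + a k) ^ 2 = 1 - b k) {S D : A}
    (hS : HasSum (fun k => (a k : ℂ) • Q k) S) (hD : HasSum (fun k => (b k : ℂ) • Q k) D) :
    CFC.sqrt (1 - D) = 1 + S := by
  have hlim := hS.tendsto_sum_nat.const_add (1 : A)
  refine CFC.sqrt_unique (tendsto_nhds_unique (hlim.mul hlim) ?_) ?_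
  · simpa only [one_add_sum_smul_mul_self (fun k => (hQ k).isIdempotentElem) horth _ hab] using
      hD.tendsto_sum_nat.const_sub (1 : A)
  · exact CStarAlgebra.isClosed_nonneg.mem_of_tendsto hlim
      (.of_forall fun n => one_add_sum_smul_nonneg hQ horth _ ha)

end OrthogonalProjections

section Contraction

lemma norm_le_one_of_star_mul_self_eq_one {E : Type*} [NormedRing E] [StarRing E] [CStarRing E]
    {T : E} (hT : star T * T = 1) : ‖T‖ ≤ 1 := by
  have h := IsStarProjection.norm_le 1 (IsStarProjection.one E)
  rw [← hT, CStarRing.norm_star_mul_self] at h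
  nlinarith [norm_nonneg T]

/-- `X ↦ x + c • (S * X * T)` is a contraction, so it has at most one fixed point. -/
lemma eq_of_eq_add_smul_mul_mul {𝕜 E : Type*} [NormedField 𝕜] [NormedRing E]
    [NormedAlgebra 𝕜 E] {c : 𝕜} {S T x X Y : E} (hc : ‖c‖ < 1) (hS : ‖S‖ ≤ 1) (hT : ‖T‖ ≤ 1)
    (hX : X = x + c • (S * X * T)) (hY : Y = x + c • (S * Y * T)) : X = Y := by
  have hdiff : X - Y = c • (S * (X - Y) * T) := by
    rw [mul_sub, sub_mul, smul_sub]
    conv_lhs => rw [hX, hY]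
    abel
  have hle : ‖X - Y‖ ≤ ‖c‖ * ‖X - Y‖ :=
    calc ‖X - Y‖ = ‖c • (S * (X - Y) * T)‖ := congrArg norm hdiff
      _ ≤ ‖c‖ * (‖S‖ * ‖X - Y‖ * ‖T‖) := by
        rw [norm_smul]; gcongr; exact norm_mul₃_le
      _ ≤ ‖c‖ * (1 * ‖X - Y‖ * 1) := by gcongr
      _ = ‖c‖ * ‖X - Y‖ := by ring
  exact sub_eq_zero.mp (norm_eq_zero.mp (by nlinarith [norm_nonneg (X - Y), norm_nonneg c]))

end Contraction

section WoldRecursion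

variable {A : Type*} [CStarAlgebra A] {T : A}

lemma one_sub_eq_of_hasSum_woldProj {q : ℝ} {D : A}
    (hD : HasSum (fun k => ((q ^ (k + 1) : ℝ) : ℂ) • woldProj T k) D) :
    1 - D = ((1 - q : ℝ) : ℂ) • 1 + (q : ℂ) • (T * (1 - D) * star T) := by
  have hconj : HasSum (fun k => ((q ^ (k + 1 + 1) : ℝ) : ℂ) • woldProj T (k + 1))
      ((q : ℂ) • (T * D * star T)) := by
    have h := ((hD.mul_left T).mul_right (star T)).const_smul (q : ℂ)
    simp only [mul_smul_comm, smul_mul_assoc, mul_woldProj_mul_star, smul_smul,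
      ← Complex.ofReal_mul, ← pow_succ'] at h
    exact h
  have hshift : (q : ℂ) • (T * D * star T) = D - (q : ℂ) • (1 - T * star T) := by
    have h := (hasSum_nat_add_iff' 1).mpr hD
    rw [sum_range_one, woldProj_zero, zero_add, pow_one] at h
    exact hconj.unique h
  rw [mul_sub, sub_mul, mul_one, smul_sub, hshift, Complex.ofReal_sub, Complex.ofReal_one,
    sub_smul, one_smul, smul_sub]
  abel

end WoldRecursion

lemma mul_star_eq_of_eq_mul_sqrt {A : Type*} [CStarAlgebra A] [PartialOrder A] [StarOrderedRing A]
    {T Z : A} (hZ : Z = T * CFC.sqrt (star Z * Z)) : Z * star Z = T * (star Z * Z) * star T := by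
  conv_lhs => rw [hZ]
  rw [star_mul, (CFC.sqrt_nonneg (star Z * Z)).isSelfAdjoint.star_eq, mul_assoc,
    ← mul_assoc (CFC.sqrt _), CFC.sqrt_mul_sqrt_self _ (star_mul_self_nonneg Z), ← mul_assoc]

lemma abs_sqrt_one_sub_sub_one_le {x : ℝ} (hx : 0 ≤ x) : |√(1 - x) - 1| ≤ x := by
  rw [abs_sub_comm, abs_of_nonneg (sub_nonneg.mpr (Real.sqrt_le_one.mpr (by linarith)))]
  linarith [Real.le_sqrt_self_iff.mpr (by linarith : 1 - x ≤ 1)]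

theorem quantum_disc_generator_series
    {H : Type*} [NormedAddCommGroup H] [InnerProductSpace ℂ H] [CompleteSpace H]
    (q : ℝ) (hq0 : 0 < q) (hq1 : q < 1) (T Z : H →L[ℂ] H)
    (hT : star T * T = 1)
    (hZ : Z = T * CFC.sqrt (star Z * Z))
    (hrel : star Z * Z - (q : ℂ) • (Z * star Z) = ((1 - q : ℝ) : ℂ) • 1) :
    HasSum (fun k : ℕ =>
        ((Real.sqrt (1 - q ^ (k + 1)) - 1 : ℝ) : ℂ) •
          ((T ^ (k + 1)) * ((1 : H →L[ℂ] H) - T * star T) * ((star T) ^ k)))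
      (Z - T) := by
  have hQ := isStarProjection_woldProj hT
  have horth := pairwise_woldProj_mul_eq_zero hT
  have hqpow (k : ℕ) : 0 ≤ q ^ (k + 1) ∧ q ^ (k + 1) ≤ 1 :=
    ⟨by positivity, pow_le_one₀ hq0.le hq1.le⟩
  have hgeom : Summable fun k => |q ^ (k + 1)| := by
    simpa [abs_of_pos hq0, pow_succ] using (summable_geometric_of_lt_one hq0.le hq1).mul_right q
  obtain ⟨D, hD⟩ := summable_ofReal_smul_of_isStarProjection hQ hgeom
  obtain ⟨S, hS⟩ := summable_ofReal_smul_of_isStarProjection hQ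
    (a := fun k => √(1 - q ^ (k + 1)) - 1) (.of_nonneg_of_le (fun _ => abs_nonneg _)
      (fun k => (abs_sqrt_one_sub_sub_one_le (hqpow k).1).trans (le_abs_self _)) hgeom)
  have hTnorm := norm_le_one_of_star_mul_self_eq_one hT
  have hAD : star Z * Z = 1 - D :=
    eq_of_eq_add_smul_mul_mul (c := (q : ℂ)) (by simpa [abs_of_pos hq0] using hq1) hTnorm
      (by rwa [norm_star]) (by rw [← mul_star_eq_of_eq_mul_sqrt hZ, ← hrel, sub_add_cancel])
      (one_sub_eq_of_hasSum_woldProj hD)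
  have hsqrt : CFC.sqrt (star Z * Z) = 1 + S := by
    rw [hAD]
    exact CFC.sqrt_one_sub_eq_one_add_of_hasSum hQ horth (fun k => by simp) (fun k => by
      rw [add_sub_cancel, Real.sq_sqrt (by linarith [(hqpow k).2])]) hS hD
  have hZT : Z - T = T * S := by
    nth_rewrite 1 [hZ]
    rw [hsqrt, mul_add, mul_one, add_sub_cancel_left]
  rw [hZT]
  simpa only [mul_smul_comm, mul_woldProj] using hS.mul_left T
end
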